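/- arXiv:2406.02444 — 6 statements merged into one kernel-verified Lean document; each statement's English description precedes it below -/
import Mathlib

section
/- For every s ∈ {1,…,d−1}, each codeword |m_L⟩ of the four-qudit code is a +1 eigenvector of both Z_d^s ⊗ Z_d^{d−s} ⊗ I ⊗ I and I ⊗ I ⊗ Z_d^s ⊗ Z_d^{d−s}. -/
open Matrix

/-- The four-qudit codeword `|m_L⟩`. -/
noncomputable def codeword (d : ℕ) [NeZero d] (m : Fin d) :
    Fin d × Fin d × Fin d × Fin d → ℂ :=
  fun p => (1 / (Real.sqrt d : ℂ)) *
    (if p.2.1 = p.1 ∧ p.2.2.1 = p.1 + m ∧ p.2.2.2 = p.1 + m then 1 else 0)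

/-- The qudit Pauli phase operator `Z_d`. -/
noncomputable def pauliZ (d : ℕ) [NeZero d] : Matrix (Fin d) (Fin d) ℂ :=
  fun a b => if a = b then Complex.exp (2 * Real.pi * Complex.I * (a : ℕ) / d) else 0

/-- Four-fold tensor product of single-qudit operators. -/
def tens4 {d : ℕ} (A B C D : Matrix (Fin d) (Fin d) ℂ) :
    Matrix (Fin d × Fin d × Fin d × Fin d) (Fin d × Fin d × Fin d × Fin d) ℂ :=
  fun p q => A p.1 q.1 * B p.2.1 q.2.1 * C p.2.2.1 q.2.2.1 * D p.2.2.2 q.2.2.2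

/-- `Z_d` as a diagonal matrix. -/
lemma pauliZ_eq_diagonal (d : ℕ) [NeZero d] :
    pauliZ d = Matrix.diagonal
      (fun a : Fin d => Complex.exp (2 * Real.pi * Complex.I * (a : ℕ) / d)) := by
  ext a b
  simp [pauliZ, Matrix.diagonal_apply]

lemma phase_pow_d (d : ℕ) [NeZero d] (a : Fin d) :
    Complex.exp (2 * Real.pi * Complex.I * (a : ℕ) / d) ^ d = 1 := by
  rw [← Complex.exp_nat_mul]
  have hd : (d : ℂ) ≠ 0 := Nat.cast_ne_zero.mpr (NeZero.ne d)
  have : (d : ℂ) * (2 * Real.pi * Complex.I * (a : ℕ) / d)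
      = (a : ℕ) * (2 * Real.pi * Complex.I) := by
    field_simp
  rw [this, Complex.exp_nat_mul_two_pi_mul_I]

lemma phase_mul (d : ℕ) [NeZero d] (s : ℕ) (hs : s ≤ d) (a : Fin d) :
    Complex.exp (2 * Real.pi * Complex.I * (a : ℕ) / d) ^ s *
      Complex.exp (2 * Real.pi * Complex.I * (a : ℕ) / d) ^ (d - s) = 1 := by
  rw [← pow_add, Nat.add_sub_cancel' hs, phase_pow_d]

theorem codeword_eigenvector_Z_stabilizers (d : ℕ) [NeZero d] (hd : 2 ≤ d)
    (s : ℕ) (hs1 : 1 ≤ s) (hs2 : s ≤ d - 1) (m : Fin d) :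
    (tens4 (pauliZ d ^ s) (pauliZ d ^ (d - s)) 1 1).mulVec (codeword d m) =
        codeword d m ∧
    (tens4 1 1 (pauliZ d ^ s) (pauliZ d ^ (d - s))).mulVec (codeword d m) =
        codeword d m := by
  have hsd : s ≤ d := le_trans hs2 (Nat.sub_le d 1)
  set f : Fin d → ℂ := fun a => Complex.exp (2 * Real.pi * Complex.I * (a : ℕ) / d)
  have hZ : ∀ k : ℕ, pauliZ d ^ k = Matrix.diagonal (fun a => f a ^ k) := by
    intro k
    rw [pauliZ_eq_diagonal, Matrix.diagonal_pow]
    rfl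
  have hone : (1 : Matrix (Fin d) (Fin d) ℂ) = Matrix.diagonal (fun _ => (1:ℂ)) :=
    (Matrix.diagonal_one).symm
  have key : ∀ (g1 g2 g3 g4 : Fin d → ℂ),
      (tens4 (Matrix.diagonal g1) (Matrix.diagonal g2) (Matrix.diagonal g3)
        (Matrix.diagonal g4)).mulVec (codeword d m)
      = fun p => g1 p.1 * g2 p.2.1 * g3 p.2.2.1 * g4 p.2.2.2 * codeword d m p := by
    intro g1 g2 g3 g4
    funext p
    rw [Matrix.mulVec]
    rw [show (fun j => tens4 (Matrix.diagonal g1) (Matrix.diagonal g2)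
        (Matrix.diagonal g3) (Matrix.diagonal g4) p j) ⬝ᵥ codeword d m
      = ∑ q, tens4 (Matrix.diagonal g1) (Matrix.diagonal g2) (Matrix.diagonal g3)
          (Matrix.diagonal g4) p q * codeword d m q from rfl]
    rw [Finset.sum_eq_single p]
    · simp [tens4, Matrix.diagonal_apply_eq]
    · intro q _ hq
      have : q.1 ≠ p.1 ∨ q.2.1 ≠ p.2.1 ∨ q.2.2.1 ≠ p.2.2.1 ∨ q.2.2.2 ≠ p.2.2.2 := by
        by_contra h
        push_neg at h
        exact hq (Prod.ext h.1 (Prod.ext h.2.1 (Prod.ext h.2.2.1 h.2.2.2)))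
      rcases this with h | h | h | h <;>
        simp [tens4, Matrix.diagonal_apply_ne' _ h]
    · intro h; exact absurd (Finset.mem_univ p) h
  constructor
  · rw [hZ, hZ, hone, key]
    funext p
    by_cases hp : p.2.1 = p.1 ∧ p.2.2.1 = p.1 + m ∧ p.2.2.2 = p.1 + m
    · have : f p.1 ^ s * f p.2.1 ^ (d - s) = 1 := by
        rw [hp.1]; exact phase_mul d s hsd p.1
      simp [this]
    · simp [codeword, hp]
  · rw [hZ, hZ, hone, key]
    funext p
    by_cases hp : p.2.1 = p.1 ∧ p.2.2.1 = p.1 + m ∧ p.2.2.2 = p.1 + m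
    · have : f p.2.2.1 ^ s * f p.2.2.2 ^ (d - s) = 1 := by
        rw [hp.2.1, hp.2.2]; exact phase_mul d s hsd _
      simp [this]
    · simp [codeword, hp]
end

section
/- For the four-qudit code under amplitude-damping noise, single-qudit damping errors on the first and fourth qudits map codewords to orthogonal states: ⟨m_L| (A_x ⊗ A_0 ⊗ A_0 ⊗ A_0)† (A_0 ⊗ A_0 ⊗ A_0 ⊗ A_y) |n_L⟩ = 0 whenever (x, y, m, n) ≠ (0, 0, m, m), i.e., unless x = 0, y = 0 and m = n. -/
open Matrix

noncomputable def ampDamp (d : ℕ) (γ : ℝ) (k : ℕ) : Matrix (Fin d) (Fin d) ℂ :=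
  fun a b => if (a : ℕ) + k = (b : ℕ) then
    ((Real.sqrt (((b : ℕ).choose k) * ((1 - γ) ^ ((b : ℕ) - k) * γ ^ k)) : ℝ) : ℂ)
  else 0

noncomputable def inn {α : Type*} [Fintype α] (v w : α → ℂ) : ℂ :=
  ∑ p, (starRingEnd ℂ) (v p) * w p

set_option maxHeartbeats 4000000 in
/-- `⟨m_L| (A_x⊗A_0⊗A_0⊗A_0)† (A_0⊗A_0⊗A_0⊗A_y) |n_L⟩ = 0` unless
`x = 0`, `y = 0` and `m = n`. -/
theorem damping_first_fourth_orthogonal (d : ℕ) [NeZero d] (hd : 2 ≤ d)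
    (γ : ℝ) (hγ : γ ∈ Set.Ioo (0 : ℝ) 1) (x y m n : Fin d)
    (h : ¬ (x = 0 ∧ y = 0 ∧ m = n)) :
    inn ((tens4 (ampDamp d γ x) (ampDamp d γ 0) (ampDamp d γ 0)
          (ampDamp d γ 0)).mulVec (codeword d m))
        ((tens4 (ampDamp d γ 0) (ampDamp d γ 0) (ampDamp d γ 0)
          (ampDamp d γ y)).mulVec (codeword d n)) = 0 := by
  simp only [inn, Matrix.mulVec, dotProduct, tens4, codeword, ampDamp]
  rw [Finset.sum_eq_zero]
  rintro ⟨p1, p2, p3, p4⟩ -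
  rw [map_sum, Finset.sum_mul]
  rw [Finset.sum_eq_zero]
  rintro ⟨q1, q2, q3, q4⟩ -
  rw [Finset.mul_sum]
  rw [Finset.sum_eq_zero]
  rintro ⟨r1, r2, r3, r4⟩ -
  simp only [add_zero]
  split_ifs with h1 h2 h3 h4 h5 h6 h7 h8 h9 h10 <;>
    simp only [_root_.map_mul, map_zero, mul_zero, zero_mul, _root_.map_one, mul_one] <;>
    try rfl
  exfalso
  obtain ⟨hq2, hq3, hq4⟩ := h5
  obtain ⟨hr2, hr3, hr4⟩ := h10
  apply h
  have e2 : p2 = q2 := Fin.val_injective h2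
  have e3 : p3 = q3 := Fin.val_injective h3
  have e4 : p4 = q4 := Fin.val_injective h4
  have f1 : p1 = r1 := Fin.val_injective h6
  have f2 : p2 = r2 := Fin.val_injective h7
  have f3 : p3 = r3 := Fin.val_injective h8
  have ep1 : p1 = q1 := by rw [f1, ← hr2, ← f2, e2, hq2]
  have hx : x = 0 := by
    have : (p1 : ℕ) + (x : ℕ) = (p1 : ℕ) := by rw [h1, ep1]
    have : (x : ℕ) = 0 := by omega
    exact Fin.val_injective this
  have hmn : m = n := by
    have : q1 + m = q1 + n := by
      rw [← hq3, ← e3, f3, hr3, ← f1, ep1]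
    exact add_left_cancel this
  have hy : y = 0 := by
    have hp4 : p4 = r4 := by rw [e4, hq4, hmn, ← ep1, f1, ← hr4]
    have : (p4 : ℕ) + (y : ℕ) = (p4 : ℕ) := by rw [h9, hp4]
    have : (y : ℕ) = 0 := by omega
    exact Fin.val_injective this
  exact ⟨hx, hy, hmn⟩
end

section
/- For the four-qudit code under amplitude-damping noise, single-qudit damping errors at the same location map distinct codewords, and distinct damping degrees, to orthogonal states: ⟨m_L| (A_x ⊗ A_0^{⊗3})† (A_y ⊗ A_0^{⊗3}) |n_L⟩ = 0 whenever x ≠ y or m ≠ n. -/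
open Matrix

/-- `⟨m_L| (A_x⊗A_0⊗A_0⊗A_0)† (A_y⊗A_0⊗A_0⊗A_0) |n_L⟩ = 0` whenever
`x ≠ y` or `m ≠ n`. -/
theorem damping_same_location_orthogonal (d : ℕ) [NeZero d] (hd : 2 ≤ d)
    (γ : ℝ) (hγ : γ ∈ Set.Ioo (0 : ℝ) 1) (x y m n : Fin d)
    (h : x ≠ y ∨ m ≠ n) :
    inn ((tens4 (ampDamp d γ x) (ampDamp d γ 0) (ampDamp d γ 0)
          (ampDamp d γ 0)).mulVec (codeword d m))
        ((tens4 (ampDamp d γ y) (ampDamp d γ 0) (ampDamp d γ 0)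
          (ampDamp d γ 0)).mulVec (codeword d n)) = 0 := by
  classical
  simp only [inn, Matrix.mulVec, dotProduct, map_sum]
  rw [show (0 : ℂ) = ∑ p : Fin d × Fin d × Fin d × Fin d, 0 by simp]
  refine Finset.sum_congr rfl fun p _ => ?_
  rw [Finset.sum_mul_sum]
  rw [show (0 : ℂ) = ∑ q : Fin d × Fin d × Fin d × Fin d,
      (∑ r : Fin d × Fin d × Fin d × Fin d, 0) by simp]
  refine Finset.sum_congr rfl fun q _ => Finset.sum_congr rfl fun r _ => ?_
  obtain ⟨p1, p2, p3, p4⟩ := p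
  obtain ⟨q1, q2, q3, q4⟩ := q
  obtain ⟨r1, r2, r3, r4⟩ := r
  simp only [tens4, ampDamp, codeword]
  have hx := x.isLt
  have hy := y.isLt
  have hm := m.isLt
  have hn := n.isLt
  have hq1 := q1.isLt
  have hr1 := r1.isLt
  have hp2 := p2.isLt
  have hp3 := p3.isLt
  by_cases H : ((p1 : ℕ) + (x : ℕ) = (q1 : ℕ)) ∧ ((p2 : ℕ) + 0 = (q2 : ℕ)) ∧
      ((p3 : ℕ) + 0 = (q3 : ℕ)) ∧ ((p4 : ℕ) + 0 = (q4 : ℕ)) ∧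
      (q2 = q1 ∧ q3 = q1 + m ∧ q4 = q1 + m) ∧
      ((p1 : ℕ) + (y : ℕ) = (r1 : ℕ)) ∧ ((p2 : ℕ) + 0 = (r2 : ℕ)) ∧
      ((p3 : ℕ) + 0 = (r3 : ℕ)) ∧ ((p4 : ℕ) + 0 = (r4 : ℕ)) ∧
      (r2 = r1 ∧ r3 = r1 + n ∧ r4 = r1 + n)
  · exfalso
    obtain ⟨h1, h2, h3, h4, ⟨c1, c2, c3⟩, g1, g2, g3, g4, e1, e2, e3⟩ := H
    have hq1r1 : q1 = r1 := by
      have : (q1 : ℕ) = (r1 : ℕ) := by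
        have hc1 := Fin.val_eq_val q2 q1 |>.mpr c1
        have he1 := Fin.val_eq_val r2 r1 |>.mpr e1
        omega
      exact Fin.ext this
    have hxy : x = y := by
      apply Fin.ext
      have : (q1 : ℕ) = (r1 : ℕ) := by rw [hq1r1]
      omega
    have hq3r3 : q3 = r3 := Fin.ext (by omega)
    have hmn : m = n := by
      have : q1 + m = q1 + n := by
        rw [← c2, hq3r3, e2, hq1r1]
      exact add_left_cancel this
    rcases h with h | h
    · exact h hxy
    · exact h hmn
  · simp only [not_and_or] at H
    rcases H with hh | hh | hh | hh | hh | hh | hh | hh | hh | hh <;>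
      first
        | simp only [if_neg hh, mul_zero, zero_mul, map_zero]
        | (have hc : ¬(q2 = q1 ∧ q3 = q1 + m ∧ q4 = q1 + m) := by tauto
           simp only [if_neg hc, mul_zero, zero_mul, map_zero])
        | (have hc : ¬(r2 = r1 ∧ r3 = r1 + n ∧ r4 = r1 + n) := by tauto
           simp only [if_neg hc, mul_zero, zero_mul, map_zero])
end

section
/- For the four-qudit code, the no-damping diagonal matrix element is ⟨m_L| (A_0^{⊗4})† (A_0^{⊗4}) |m_L⟩ = (1/d) ∑_{i=0}^{d−1} (1−γ)^{2i + 2((i+m) mod d)}; in particular its first-order Taylor expansion in γ at 0 equals 1 − 2(d−1)γ, independent of the codeword index m. -/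
open Matrix

lemma real_id (d : ℕ) [NeZero d] (x : ℝ) (hx : 0 ≤ x) (b j : ℕ) :
    (Real.sqrt (x ^ b) * Real.sqrt (x ^ b) * Real.sqrt (x ^ j) * Real.sqrt (x ^ j)
      * (1 / Real.sqrt d)) *
    (Real.sqrt (x ^ b) * Real.sqrt (x ^ b) * Real.sqrt (x ^ j) * Real.sqrt (x ^ j)
      * (1 / Real.sqrt d)) = 1 / d * x ^ (2 * b + 2 * j) := by
  have hds : Real.sqrt d * Real.sqrt d = d := Real.mul_self_sqrt (by positivity)
  have hxb : Real.sqrt (x ^ b) * Real.sqrt (x ^ b) = x ^ b :=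
    Real.mul_self_sqrt (by positivity)
  have hxj : Real.sqrt (x ^ j) * Real.sqrt (x ^ j) = x ^ j :=
    Real.mul_self_sqrt (by positivity)
  calc _ = (Real.sqrt (x^b)*Real.sqrt (x^b))*(Real.sqrt (x^b)*Real.sqrt (x^b))
        *((Real.sqrt (x^j)*Real.sqrt (x^j))*(Real.sqrt (x^j)*Real.sqrt (x^j)))
        *(1/(Real.sqrt d*Real.sqrt d)) := by ring
    _ = 1 / d * x ^ (2 * b + 2 * j) := by
        rw [hxb, hxj, hds, pow_add, two_mul, two_mul, pow_add, pow_add]; ring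

lemma ampDamp_zero (d : ℕ) (γ : ℝ) (a b : Fin d) :
    ampDamp d γ 0 a b = if a = b then ((Real.sqrt ((1 - γ) ^ (b : ℕ)) : ℝ) : ℂ) else 0 := by
  simp [ampDamp, Fin.val_inj]

lemma mulVec_eq (d : ℕ) [NeZero d] (γ : ℝ) (m : Fin d)
    (p : Fin d × Fin d × Fin d × Fin d) :
    (tens4 (ampDamp d γ 0) (ampDamp d γ 0) (ampDamp d γ 0)
      (ampDamp d γ 0)).mulVec (codeword d m) p
    = ((Real.sqrt ((1 - γ) ^ (p.1 : ℕ)) : ℂ) * (Real.sqrt ((1 - γ) ^ (p.2.1 : ℕ)) : ℂ)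
      * (Real.sqrt ((1 - γ) ^ (p.2.2.1 : ℕ)) : ℂ)
      * (Real.sqrt ((1 - γ) ^ (p.2.2.2 : ℕ)) : ℂ)) * codeword d m p := by
  obtain ⟨a, b, c, e⟩ := p
  simp only [Matrix.mulVec, dotProduct, tens4, ampDamp_zero, Fintype.sum_prod_type,
    ite_mul, zero_mul, mul_ite, mul_zero, Finset.sum_ite_eq, Finset.mem_univ, if_true]

lemma pointwise (d : ℕ) [NeZero d] (γ : ℝ) (hγ1 : γ ≤ 1) (m : Fin d) (a b c e : Fin d) :
    (starRingEnd ℂ) ((tens4 (ampDamp d γ 0) (ampDamp d γ 0) (ampDamp d γ 0)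
        (ampDamp d γ 0)).mulVec (codeword d m) (a, b, c, e)) *
      (tens4 (ampDamp d γ 0) (ampDamp d γ 0) (ampDamp d γ 0)
        (ampDamp d γ 0)).mulVec (codeword d m) (a, b, c, e)
    = if b = a ∧ c = a + m ∧ e = a + m then
        ((1 / d * (1 - γ) ^ (2 * (a : ℕ) + 2 * (((a + m : Fin d)) : ℕ)) : ℝ) : ℂ)
      else 0 := by
  by_cases h : b = a ∧ c = a + m ∧ e = a + m
  · obtain ⟨hb, hc, he⟩ := h
    subst hb hc he
    rw [mulVec_eq, if_pos ⟨rfl, rfl, rfl⟩]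
    have hcw : codeword d m (b, b, b + m, b + m) = ((1 / Real.sqrt d : ℝ) : ℂ) := by
      simp [codeword]
    rw [hcw]
    simp only [← Complex.ofReal_mul]
    rw [Complex.conj_ofReal, ← Complex.ofReal_mul]
    exact congrArg Complex.ofReal (real_id d (1 - γ) (by linarith) b (b + m : Fin d))
  · rw [mulVec_eq]
    simp [codeword, h]

lemma part1 (d : ℕ) [NeZero d] (γ : ℝ) (hγ1 : γ ≤ 1) (m : Fin d) :
    inn ((tens4 (ampDamp d γ 0) (ampDamp d γ 0) (ampDamp d γ 0)
          (ampDamp d γ 0)).mulVec (codeword d m))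
        ((tens4 (ampDamp d γ 0) (ampDamp d γ 0) (ampDamp d γ 0)
          (ampDamp d γ 0)).mulVec (codeword d m))
      = (((1 / d) * ∑ i ∈ Finset.range d,
          (1 - γ) ^ (2 * i + 2 * ((i + (m : ℕ)) % d)) : ℝ) : ℂ) := by
  unfold inn
  simp only [Fintype.sum_prod_type]
  simp only [pointwise d γ hγ1 m]
  simp only [ite_and, Finset.sum_ite_eq, Finset.sum_ite_eq', Finset.mem_univ, if_true,
    Finset.sum_ite_irrel, Finset.sum_const_zero]
  have hval : ∀ a : Fin d, ((a + m : Fin d) : ℕ) = ((a : ℕ) + (m : ℕ)) % d := fun a => rfl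
  simp only [hval]
  rw [Finset.mul_sum, ← Fin.sum_univ_eq_sum_range
    (fun i => (1 / (d:ℝ)) * (1 - γ) ^ (2 * i + 2 * ((i + (m:ℕ)) % d))) d]
  push_cast
  ring_nf

lemma mod_sum_eq (d : ℕ) [NeZero d] (m : Fin d) :
    ∑ i ∈ Finset.range d, ((i + (m : ℕ)) % d) = ∑ i ∈ Finset.range d, i := by
  rw [← Fin.sum_univ_eq_sum_range (fun i => (i + (m : ℕ)) % d) d,
      ← Fin.sum_univ_eq_sum_range (fun i => i) d]
  exact Fintype.sum_equiv (Equiv.addRight m) _ _ (fun i => rfl)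

lemma exp_sum (d : ℕ) [NeZero d] (m : Fin d) :
    ∑ i ∈ Finset.range d, (2 * i + 2 * ((i + (m : ℕ)) % d)) = 2 * (d * (d - 1)) := by
  rw [Finset.sum_add_distrib, ← Finset.mul_sum, ← Finset.mul_sum, mod_sum_eq]
  have h := Finset.sum_range_id_mul_two d
  omega

lemma deriv_term (n : ℕ) : HasDerivAt (fun g : ℝ => (1 - g) ^ n) (-(n : ℝ)) 0 := by
  have h1 : HasDerivAt (fun g : ℝ => 1 - g) (-1) 0 := (hasDerivAt_id 0).const_sub 1
  simpa using h1.fun_pow n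

/-- The no-damping diagonal matrix element of the four-qudit code equals
`(1/d) ∑_i (1-γ)^(2i + 2((i+m) mod d))`, whose value at `γ = 0` is `1` and whose
derivative at `γ = 0` is `-2(d-1)`, i.e. its first-order Taylor expansion is
`1 - 2(d-1)γ`, independent of `m`. -/
theorem no_damping_matrix_element (d : ℕ) [NeZero d] (hd : 2 ≤ d)
    (γ : ℝ) (hγ : γ ∈ Set.Icc (0 : ℝ) 1) (m : Fin d) :
    inn ((tens4 (ampDamp d γ 0) (ampDamp d γ 0) (ampDamp d γ 0)
          (ampDamp d γ 0)).mulVec (codeword d m))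
        ((tens4 (ampDamp d γ 0) (ampDamp d γ 0) (ampDamp d γ 0)
          (ampDamp d γ 0)).mulVec (codeword d m))
      = (((1 / d) * ∑ i ∈ Finset.range d,
          (1 - γ) ^ (2 * i + 2 * ((i + (m : ℕ)) % d)) : ℝ) : ℂ) ∧
    ((1 / d : ℝ) * ∑ i ∈ Finset.range d,
        (1 - (0 : ℝ)) ^ (2 * i + 2 * ((i + (m : ℕ)) % d))) = 1 ∧
    HasDerivAt (fun g : ℝ => (1 / d : ℝ) * ∑ i ∈ Finset.range d,
        (1 - g) ^ (2 * i + 2 * ((i + (m : ℕ)) % d))) (-(2 * (d - 1 : ℝ))) 0 := by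
  have hd0 : (d : ℝ) ≠ 0 := Nat.cast_ne_zero.mpr (NeZero.ne d)
  refine ⟨part1 d γ hγ.2 m, ?_, ?_⟩
  · simp only [sub_zero, one_pow, Finset.sum_const, Finset.card_range, nsmul_eq_mul,
      mul_one]
    exact one_div_mul_cancel hd0
  · have hsum : HasDerivAt (fun g : ℝ => ∑ i ∈ Finset.range d,
        (1 - g) ^ (2 * i + 2 * ((i + (m : ℕ)) % d)))
        (∑ i ∈ Finset.range d, -((2 * i + 2 * ((i + (m : ℕ)) % d) : ℕ) : ℝ)) 0 :=
      HasDerivAt.fun_sum fun i _ => deriv_term _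
    have h : HasDerivAt (fun g : ℝ => (1 / d : ℝ) * ∑ i ∈ Finset.range d,
        (1 - g) ^ (2 * i + 2 * ((i + (m : ℕ)) % d)))
        ((1 / d : ℝ) * ∑ i ∈ Finset.range d, -((2 * i + 2 * ((i + (m : ℕ)) % d) : ℕ) : ℝ)) 0 :=
      hsum.const_mul (1 / d : ℝ)
    convert h using 1
    rw [Finset.sum_neg_distrib]
    rw [show (∑ i ∈ Finset.range d, ((2 * i + 2 * ((i + (m : ℕ)) % d) : ℕ) : ℝ))
        = ((2 * (d * (d - 1)) : ℕ) : ℝ) by rw [← Nat.cast_sum, exp_sum d m]]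
    have h1d : ((d - 1 : ℕ) : ℝ) = (d : ℝ) - 1 := by
      rw [Nat.cast_sub (by omega)]; norm_num
    push_cast [h1d]
    field_simp
end

section
/- The four two-qudit single-damping errors A_{1010} = A_1⊗A_0⊗A_1⊗A_0, A_{1001} = A_1⊗A_0⊗A_0⊗A_1, A_{0101} = A_0⊗A_1⊗A_0⊗A_1, A_{0110} = A_0⊗A_1⊗A_1⊗A_0 map the four-qudit codewords to mutually orthogonal states: ⟨m_L| A_α† A_β |n_L⟩ = 0 whenever α ≠ β or m ≠ n, for α, β ranging over these four operators. -/
open Matrix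

/-- The four two-qudit single-damping errors
`A_{1010}, A_{1001}, A_{0101}, A_{0110}`. -/
noncomputable def twoQuditErr (d : ℕ) (γ : ℝ) :
    Fin 4 → Matrix (Fin d × Fin d × Fin d × Fin d) (Fin d × Fin d × Fin d × Fin d) ℂ :=
  ![tens4 (ampDamp d γ 1) (ampDamp d γ 0) (ampDamp d γ 1) (ampDamp d γ 0),
    tens4 (ampDamp d γ 1) (ampDamp d γ 0) (ampDamp d γ 0) (ampDamp d γ 1),
    tens4 (ampDamp d γ 0) (ampDamp d γ 1) (ampDamp d γ 0) (ampDamp d γ 1),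
    tens4 (ampDamp d γ 0) (ampDamp d γ 1) (ampDamp d γ 1) (ampDamp d γ 0)]

lemma sum_if_const {α : Type*} {P : Prop} [Decidable P] (s : Finset α) (f : α → ℂ) :
    (∑ x ∈ s, if P then f x else 0) = if P then ∑ x ∈ s, f x else 0 := by
  split <;> simp

lemma mulVec_cw {d : ℕ} [NeZero d] (A B C D : Matrix (Fin d) (Fin d) ℂ) (m : Fin d)
    (p : Fin d × Fin d × Fin d × Fin d) :
    ((tens4 A B C D).mulVec (codeword d m)) p =
    (1 / (Real.sqrt d : ℂ)) * ∑ i : Fin d,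
      A p.1 i * B p.2.1 i * C p.2.2.1 (i + m) * D p.2.2.2 (i + m) := by
  simp only [mulVec, dotProduct, tens4, codeword, Fintype.sum_prod_type,
    mul_ite, mul_one, mul_zero, Finset.mul_sum, ite_and, sum_if_const,
    Fintype.sum_ite_eq', Finset.sum_ite_eq', Finset.mem_univ, if_true]
  exact Finset.sum_congr rfl fun x _ => by ring

lemma ampDamp_ne {d : ℕ} {γ : ℝ} {k : ℕ} {a b : Fin d}
    (h : ampDamp d γ k a b ≠ 0) : (a : ℕ) + k = (b : ℕ) := by
  by_contra hc
  exact h (by simp [ampDamp, hc])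

lemma key {d : ℕ} [NeZero d] (γ : ℝ) (k1 k2 k3 k4 l1 l2 l3 l4 : ℕ) (m n : Fin d)
    (H : ∀ a b c e i j : Fin d,
      (a : ℕ) + k1 = (i : ℕ) → (b : ℕ) + k2 = (i : ℕ) →
      (c : ℕ) + k3 = ((i + m : Fin d) : ℕ) → (e : ℕ) + k4 = ((i + m : Fin d) : ℕ) →
      (a : ℕ) + l1 = (j : ℕ) → (b : ℕ) + l2 = (j : ℕ) →
      (c : ℕ) + l3 = ((j + n : Fin d) : ℕ) → (e : ℕ) + l4 = ((j + n : Fin d) : ℕ) → False) :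
    inn ((tens4 (ampDamp d γ k1) (ampDamp d γ k2) (ampDamp d γ k3)
          (ampDamp d γ k4)).mulVec (codeword d m))
        ((tens4 (ampDamp d γ l1) (ampDamp d γ l2) (ampDamp d γ l3)
          (ampDamp d γ l4)).mulVec (codeword d n)) = 0 := by
  unfold inn
  apply Finset.sum_eq_zero
  intro p _
  rw [mulVec_cw, mulVec_cw, _root_.map_mul, map_sum, mul_mul_mul_comm, Finset.sum_mul_sum]
  rw [Finset.sum_eq_zero, mul_zero]
  intro i _
  apply Finset.sum_eq_zero
  intro j _
  by_contra hne
  simp only [mul_eq_zero, map_eq_zero, not_or] at hne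
  obtain ⟨⟨⟨⟨h1, h2⟩, h3⟩, h4⟩, ⟨⟨h5, h6⟩, h7⟩, h8⟩ := hne
  exact H p.1 p.2.1 p.2.2.1 p.2.2.2 i j (ampDamp_ne h1) (ampDamp_ne h2)
    (ampDamp_ne h3) (ampDamp_ne h4) (ampDamp_ne h5) (ampDamp_ne h6)
    (ampDamp_ne h7) (ampDamp_ne h8)

/-- `⟨m_L| A_α† A_β |n_L⟩ = 0` whenever `α ≠ β` or `m ≠ n`, for `α, β` among
the two-qudit single-damping errors. -/
theorem two_qudit_errors_orthogonal (d : ℕ) [NeZero d] (hd : 2 ≤ d)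
    (γ : ℝ) (hγ : γ ∈ Set.Ioo (0 : ℝ) 1) (α β : Fin 4) (m n : Fin d)
    (h : α ≠ β ∨ m ≠ n) :
    inn ((twoQuditErr d γ α).mulVec (codeword d m))
        ((twoQuditErr d γ β).mulVec (codeword d n)) = 0 := by
  have hmn : α = β → m ≠ n := by
    rintro rfl
    rcases h with h | h
    · exact absurd rfl h
    · exact h
  fin_cases α <;> fin_cases β <;>
    simp only [twoQuditErr, Matrix.cons_val_zero, Matrix.cons_val_one, Matrix.head_cons,
      Matrix.cons_val_fin_one, Fin.isValue, Matrix.cons_val_two, Matrix.tail_cons,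
      Matrix.cons_val_three] <;>
    apply key <;>
    intro a b c e i j h1 h2 h3 h4 h5 h6 h7 h8 <;>
    first
    | omega
    | · have hij : i = j := Fin.ext (by omega)
        subst hij
        exact hmn rfl (add_left_cancel (Fin.ext
          (show ((i + m : Fin d) : ℕ) = ((i + n : Fin d) : ℕ) by omega)))
end

section
/- If a state A_{x000}|m_L⟩ = (A_x⊗A_0⊗A_0⊗A_0)|m_L⟩ is nonzero, then it is an eigenvector of the stabilizer Z_d ⊗ Z_d^{d−1} ⊗ I ⊗ I with eigenvalue ω^{−x}, where ω = e^{2πi/d}; i.e., measuring this stabilizer on a single x-damping error on the first qudit yields the syndrome (−x) mod d. -/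
open Matrix

lemma pauliZ_diag (d : ℕ) [NeZero d] :
    pauliZ d = Matrix.diagonal (fun a : Fin d =>
      Complex.exp (2 * Real.pi * Complex.I / d) ^ (a : ℕ)) := by
  funext a b
  rw [Matrix.diagonal_apply, pauliZ]
  by_cases h : a = b
  · simp only [h, if_true]
    rw [← Complex.exp_nat_mul]
    congr 1
    ring
  · simp [h]

lemma tens4_diag {d : ℕ} (f g h k : Fin d → ℂ) :
    tens4 (Matrix.diagonal f) (Matrix.diagonal g) (Matrix.diagonal h) (Matrix.diagonal k)
      = Matrix.diagonal (fun p : Fin d × Fin d × Fin d × Fin d =>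
          f p.1 * g p.2.1 * h p.2.2.1 * k p.2.2.2) := by
  funext p q
  simp only [tens4, Matrix.diagonal_apply, Prod.ext_iff]
  by_cases h1 : p.1 = q.1 <;> by_cases h2 : p.2.1 = q.2.1 <;>
    by_cases h3 : p.2.2.1 = q.2.2.1 <;> by_cases h4 : p.2.2.2 = q.2.2.2 <;>
    simp [h1, h2, h3, h4]

/-- If `(A_x⊗A_0⊗A_0⊗A_0)|m_L⟩` is nonzero then it is an eigenvector of the
stabilizer `Z_d ⊗ Z_d^{d-1} ⊗ I ⊗ I` with eigenvalue `ω^{-x}`, `ω = e^{2πi/d}`. -/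
theorem damped_state_syndrome (d : ℕ) [NeZero d] (hd : 2 ≤ d)
    (γ : ℝ) (hγ : γ ∈ Set.Ioo (0 : ℝ) 1) (x m : Fin d)
    (hne : (tens4 (ampDamp d γ x) (ampDamp d γ 0) (ampDamp d γ 0)
        (ampDamp d γ 0)).mulVec (codeword d m) ≠ 0) :
    (tens4 (pauliZ d) (pauliZ d ^ (d - 1)) 1 1).mulVec
        ((tens4 (ampDamp d γ x) (ampDamp d γ 0) (ampDamp d γ 0)
          (ampDamp d γ 0)).mulVec (codeword d m))
      = (Complex.exp (2 * Real.pi * Complex.I / d) ^ (-(x : ℤ))) •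
        ((tens4 (ampDamp d γ x) (ampDamp d γ 0) (ampDamp d γ 0)
          (ampDamp d γ 0)).mulVec (codeword d m)) := by
  have hd0 : d ≠ 0 := NeZero.ne d
  set ω : ℂ := Complex.exp (2 * Real.pi * Complex.I / d) with hωdef
  have hωd : ω ^ d = 1 := by
    rw [hωdef, ← Complex.exp_nat_mul]
    have hdc : (d : ℂ) ≠ 0 := Nat.cast_ne_zero.mpr hd0
    rw [show (d : ℂ) * (2 * Real.pi * Complex.I / d) = 2 * Real.pi * Complex.I by
      field_simp]
    exact Complex.exp_two_pi_mul_I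
  have hstab : tens4 (pauliZ d) (pauliZ d ^ (d - 1)) 1 1
      = Matrix.diagonal (fun p : Fin d × Fin d × Fin d × Fin d =>
          ω ^ (p.1 : ℕ) * (ω ^ (p.2.1 : ℕ)) ^ (d - 1) * 1 * 1) := by
    rw [pauliZ_diag, Matrix.diagonal_pow, ← Matrix.diagonal_one, tens4_diag]
    rfl
  set v := (tens4 (ampDamp d γ x) (ampDamp d γ 0) (ampDamp d γ 0)
      (ampDamp d γ 0)).mulVec (codeword d m) with hv
  funext p
  rw [hstab, Matrix.mulVec_diagonal, Pi.smul_apply, smul_eq_mul]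
  by_cases hvp : v p = 0
  · rw [hvp, mul_zero, mul_zero]
  -- extract the relation p.2.1 = p.1 + x (in ℕ)
  have hsum : ∑ q, (tens4 (ampDamp d γ x) (ampDamp d γ 0) (ampDamp d γ 0)
      (ampDamp d γ 0)) p q * codeword d m q ≠ 0 := by
    rwa [hv, Matrix.mulVec, dotProduct] at hvp
  obtain ⟨q, -, hfq⟩ := Finset.exists_ne_zero_of_sum_ne_zero hsum
  rw [tens4] at hfq
  have h1 : ampDamp d γ x p.1 q.1 ≠ 0 := fun h => hfq (by simp [h])
  have h2 : ampDamp d γ 0 p.2.1 q.2.1 ≠ 0 := fun h => hfq (by simp [h])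
  have hcw : codeword d m q ≠ 0 := fun h => hfq (by simp [h])
  have e1 : (p.1 : ℕ) + (x : ℕ) = (q.1 : ℕ) := by
    by_contra hc; exact h1 (by simp [ampDamp, hc])
  have e2 : (p.2.1 : ℕ) = (q.2.1 : ℕ) := by
    by_contra hc; exact h2 (by simp [ampDamp, hc])
  have e3 : q.2.1 = q.1 := by
    by_contra hc; exact hcw (by simp [codeword, hc])
  have e3' : (q.2.1 : ℕ) = (q.1 : ℕ) := congrArg Fin.val e3
  have key : (p.1 : ℕ) + (x : ℕ) = (p.2.1 : ℕ) := by omega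
  -- phase computation
  have hphase : ω ^ (p.1 : ℕ) * (ω ^ (p.2.1 : ℕ)) ^ (d - 1) * 1 * 1 = ω ^ (-(x : ℤ)) := by
    rw [mul_one, mul_one, ← key, ← pow_mul, ← pow_add]
    have hexp : (p.1 : ℕ) + ((p.1 : ℕ) + (x : ℕ)) * (d - 1) + (x : ℕ)
        = d * ((p.1 : ℕ) + (x : ℕ)) := by
      obtain ⟨n, rfl⟩ : ∃ n, d = n + 1 := ⟨d - 1, by omega⟩
      simp only [Nat.add_sub_cancel]
      ring
    have hmul : ω ^ ((p.1 : ℕ) + ((p.1 : ℕ) + (x : ℕ)) * (d - 1)) * ω ^ (x : ℕ) = 1 := by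
      rw [← pow_add, hexp, pow_mul, hωd, one_pow]
    rw [_root_.zpow_neg, zpow_natCast]
    exact eq_inv_of_mul_eq_one_left hmul
  rw [hphase]
end
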